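/- Define, for parameters β1, β2 ∈ (0,1] and kink y1 > 0, the balanced-budget total expected utility U(β1,β2,y1) as ∫₀^{n3} (β1 − β1²/2) n² f(n) dn + ∫_{n3}^∞ (β2 − β2²/2) n² f(n) dn with n3 = √(2y1/(β1+β2)) when β1 ≤ β2, and as ∫₀^{n1} (β1 − β1²/2) n² f(n) dn + ∫_{n1}^{n2} (y1 − y1²/(2n²)) f(n) dn + ∫_{n2}^∞ (β2 − β2²/2) n² f(n) dn with n1 = √(y1/β1), n2 = √(y1/β2) when β1 ≥ β2. Then the maximum of U over β1 ∈ (0,1], β2 ∈ (0,1], y1 > 0 equals (1/2)∫₀^∞ n² f(n) dn and is attained at β1 = β2 = 1 (i.e., no taxation). -/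

import Mathlib

open MeasureTheory Set

/-- Balanced-budget total expected utility of the two-bracket piecewise-linear tax with
retained proportions `β1, β2`, kink `y1`, and skill density `f`. -/
noncomputable def totalUtility (f : ℝ → ℝ) (β1 β2 y1 : ℝ) : ℝ :=
  if β1 ≤ β2 then
    (∫ n in Set.Ioc (0:ℝ) (Real.sqrt (2 * y1 / (β1 + β2))),
        (β1 - β1 ^ 2 / 2) * n ^ 2 * f n)
    + ∫ n in Set.Ioi (Real.sqrt (2 * y1 / (β1 + β2))),
        (β2 - β2 ^ 2 / 2) * n ^ 2 * f n
  else
    (∫ n in Set.Ioc (0:ℝ) (Real.sqrt (y1 / β1)), (β1 - β1 ^ 2 / 2) * n ^ 2 * f n)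
    + (∫ n in Set.Ioc (Real.sqrt (y1 / β1)) (Real.sqrt (y1 / β2)),
        (y1 - y1 ^ 2 / (2 * n ^ 2)) * f n)
    + ∫ n in Set.Ioi (Real.sqrt (y1 / β2)), (β2 - β2 ^ 2 / 2) * n ^ 2 * f n

/-!
Without taxes an individual of skill `n` maximises `n l - l² / 2` and gets `n² / 2`. Every piece
of the utility integrand is a utility `u(n)` reachable under some budget line, hence
`0 ≤ u(n) ≤ n² / 2`: for a flat rate `β`, `β n² - β² n² / 2 ≤ n² / 2` because `(1 - β)² ≥ 0`;
for agents bunched at the kink, `y1 - y1² / (2 n²) ≤ n² / 2` because `(n² - y1)² ≥ 0`.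
Integrating against `f` over the pieces of a partition of `(0, ∞)` gives the bound, with
equality at `β1 = β2 = 1`.
-/

section IntervalSplitting

variable {μ : Measure ℝ} {g : ℝ → ℝ} {a b : ℝ}

theorem setIntegral_Ioc_add_Ioi (hab : a ≤ b) (hg : IntegrableOn g (Ioi a) μ) :
    (∫ x in Ioc a b, g x ∂μ) + ∫ x in Ioi b, g x ∂μ = ∫ x in Ioi a, g x ∂μ := by
  rw [← setIntegral_union Ioc_disjoint_Ioi_same measurableSet_Ioi
    (hg.mono_set Ioc_subset_Ioi_self) (hg.mono_set (Ioi_subset_Ioi hab)),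
    Ioc_union_Ioi_eq_Ioi hab]

theorem setIntegral_Ioc_add_Ioc_add_Ioi {c : ℝ} (hab : a ≤ b) (hbc : b ≤ c)
    (hg : IntegrableOn g (Ioi a) μ) :
    (∫ x in Ioc a b, g x ∂μ) + (∫ x in Ioc b c, g x ∂μ) + ∫ x in Ioi c, g x ∂μ
      = ∫ x in Ioi a, g x ∂μ := by
  rw [add_assoc, setIntegral_Ioc_add_Ioi hbc (hg.mono_set (Ioi_subset_Ioi hab)),
    setIntegral_Ioc_add_Ioi hab hg]

end IntervalSplitting

theorem flat_rate_utility_nonneg {β : ℝ} (h0 : 0 ≤ β) (h2 : β ≤ 2) : 0 ≤ β - β ^ 2 / 2 := by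
  nlinarith

theorem flat_rate_utility_le_half (β : ℝ) : β - β ^ 2 / 2 ≤ 1 / 2 := by
  nlinarith [sq_nonneg (1 - β)]

theorem kink_utility_nonneg {y n : ℝ} (hy : 0 ≤ y) (hyn : y ≤ 2 * n ^ 2) :
    0 ≤ y - y ^ 2 / (2 * n ^ 2) := by
  rcases hy.eq_or_lt with rfl | hy
  · simp
  have hn : 0 < 2 * n ^ 2 := hy.trans_le hyn
  rw [sub_nonneg, div_le_iff₀ hn, sq]
  exact mul_le_mul_of_nonneg_left hyn hy.le

theorem kink_utility_le_half_sq (y : ℝ) {n : ℝ} (hn : n ≠ 0) :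
    y - y ^ 2 / (2 * n ^ 2) ≤ n ^ 2 / 2 := by
  have key : n ^ 2 / 2 - (y - y ^ 2 / (2 * n ^ 2)) = (n ^ 2 - y) ^ 2 / (2 * n ^ 2) := by
    field_simp
    ring
  linarith [key ▸ (by positivity : 0 ≤ (n ^ 2 - y) ^ 2 / (2 * n ^ 2))]

section Utility

variable {f : ℝ → ℝ} (hf_nonneg : ∀ n ∈ Ioi (0:ℝ), 0 ≤ f n)
  (hf2 : IntegrableOn (fun n => n ^ 2 * f n) (Ioi 0))
include hf_nonneg hf2

theorem setIntegral_mul_le_half_moment {u : ℝ → ℝ} {s : Set ℝ}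
    (hs : s ⊆ Ioi 0) (hu0 : ∀ n ∈ s, 0 ≤ u n) (hu : ∀ n ∈ s, u n ≤ n ^ 2 / 2) :
    ∫ n in s, u n * f n ≤ ∫ n in s, 1 / 2 * (n ^ 2 * f n) := by
  refine setIntegral_mono_of_nonneg (fun n hn => mul_nonneg (hu0 n hn) (hf_nonneg n (hs hn)))
    (fun n hn => ?_) (IntegrableOn.mono_set (hf2.const_mul _) hs)
  calc u n * f n ≤ n ^ 2 / 2 * f n := mul_le_mul_of_nonneg_right (hu n hn) (hf_nonneg n (hs hn))
    _ = 1 / 2 * (n ^ 2 * f n) := by ring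

theorem flat_rate_setIntegral_le {β : ℝ} (h0 : 0 ≤ β) (h2 : β ≤ 2) {s : Set ℝ}
    (hs : s ⊆ Ioi 0) :
    ∫ n in s, (β - β ^ 2 / 2) * n ^ 2 * f n ≤ ∫ n in s, 1 / 2 * (n ^ 2 * f n) :=
  setIntegral_mul_le_half_moment hf_nonneg hf2 hs
    (fun n _ => mul_nonneg (flat_rate_utility_nonneg h0 h2) (sq_nonneg n))
    (fun n _ => by nlinarith [flat_rate_utility_le_half β, sq_nonneg n])

theorem totalUtility_le_of_le {β1 β2 y1 : ℝ} (hβ1 : β1 ∈ Ioc (0:ℝ) 1) (hβ2 : β2 ∈ Ioc (0:ℝ) 1)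
    (hy1 : 0 < y1) (hle : β1 ≤ β2) :
    totalUtility f β1 β2 y1 ≤ 1 / 2 * ∫ n in Ioi (0:ℝ), n ^ 2 * f n := by
  set c := Real.sqrt (2 * y1 / (β1 + β2))
  have hc : 0 < c := Real.sqrt_pos.mpr (div_pos (by linarith) (by linarith [hβ1.1, hβ2.1]))
  rw [totalUtility, if_pos hle, ← integral_const_mul,
    ← setIntegral_Ioc_add_Ioi hc.le (hf2.const_mul _)]
  gcongr ?_ + ?_
  · exact flat_rate_setIntegral_le hf_nonneg hf2 hβ1.1.le (hβ1.2.trans one_le_two)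
      Ioc_subset_Ioi_self
  · exact flat_rate_setIntegral_le hf_nonneg hf2 hβ2.1.le (hβ2.2.trans one_le_two)
      (Ioi_subset_Ioi hc.le)

theorem totalUtility_le_of_lt {β1 β2 y1 : ℝ} (hβ1 : β1 ∈ Ioc (0:ℝ) 1) (hβ2 : β2 ∈ Ioc (0:ℝ) 1)
    (hy1 : 0 < y1) (hlt : β2 < β1) :
    totalUtility f β1 β2 y1 ≤ 1 / 2 * ∫ n in Ioi (0:ℝ), n ^ 2 * f n := by
  set a := Real.sqrt (y1 / β1)
  set b := Real.sqrt (y1 / β2)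
  have ha : 0 < a := Real.sqrt_pos.mpr (div_pos hy1 hβ1.1)
  have hab : a ≤ b := Real.sqrt_le_sqrt (div_le_div_of_nonneg_left hy1.le hβ2.1 hlt.le)
  -- past the first kink, `n² ≥ a² = y1 / β1 ≥ y1`
  have hy1_le : ∀ n ∈ Ioc a b, y1 ≤ 2 * n ^ 2 := fun n hn => by
    have ha_sq : a ^ 2 = y1 / β1 := Real.sq_sqrt (div_pos hy1 hβ1.1).le
    have : y1 ≤ y1 / β1 := le_div_self hy1.le hβ1.1 hβ1.2
    nlinarith [pow_le_pow_left₀ ha.le hn.1.le 2]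
  rw [totalUtility, if_neg hlt.not_ge, ← integral_const_mul,
    ← setIntegral_Ioc_add_Ioc_add_Ioi ha.le hab (hf2.const_mul _)]
  gcongr ?_ + ?_ + ?_
  · exact flat_rate_setIntegral_le hf_nonneg hf2 hβ1.1.le (hβ1.2.trans one_le_two)
      Ioc_subset_Ioi_self
  · exact setIntegral_mul_le_half_moment hf_nonneg hf2 (fun n hn => ha.trans hn.1)
      (fun n hn => kink_utility_nonneg hy1.le (hy1_le n hn))
      (fun n hn => kink_utility_le_half_sq y1 (ha.trans hn.1).ne')
  · exact flat_rate_setIntegral_le hf_nonneg hf2 hβ2.1.le (hβ2.2.trans one_le_two)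
      (Ioi_subset_Ioi (ha.le.trans hab))

end Utility

theorem totalUtility_one_one {f : ℝ → ℝ} (hf2 : IntegrableOn (fun n => n ^ 2 * f n) (Ioi 0))
    {y1 : ℝ} (hy1 : 0 < y1) :
    totalUtility f 1 1 y1 = 1 / 2 * ∫ n in Ioi (0:ℝ), n ^ 2 * f n := by
  have hc : 0 < Real.sqrt (2 * y1 / (1 + 1)) := Real.sqrt_pos.mpr (by positivity)
  have half : ∀ n : ℝ, ((1:ℝ) - 1 ^ 2 / 2) * n ^ 2 * f n = 1 / 2 * (n ^ 2 * f n) :=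
    fun n => by ring
  simp only [totalUtility, le_refl, if_true, half]
  rw [setIntegral_Ioc_add_Ioi hc.le (hf2.const_mul _), integral_const_mul]

theorem stmt11_general (f : ℝ → ℝ)
    (hf_nonneg : ∀ n ∈ Set.Ioi (0:ℝ), 0 ≤ f n)
    (hf2 : IntegrableOn (fun n => n ^ 2 * f n) (Set.Ioi 0)) :
    (∀ β1 ∈ Set.Ioc (0:ℝ) 1, ∀ β2 ∈ Set.Ioc (0:ℝ) 1, ∀ y1 > (0:ℝ),
        totalUtility f β1 β2 y1 ≤ (1 / 2) * ∫ n in Set.Ioi (0:ℝ), n ^ 2 * f n) ∧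
    (∀ y1 > (0:ℝ),
        totalUtility f 1 1 y1 = (1 / 2) * ∫ n in Set.Ioi (0:ℝ), n ^ 2 * f n) := by
  refine ⟨fun β1 hβ1 β2 hβ2 y1 hy1 => ?_, fun y1 hy1 => totalUtility_one_one hf2 hy1⟩
  rcases le_or_gt β1 β2 with hle | hlt
  · exact totalUtility_le_of_le hf_nonneg hf2 hβ1 hβ2 hy1 hle
  · exact totalUtility_le_of_lt hf_nonneg hf2 hβ1 hβ2 hy1 hlt

/-- The maximum of the balanced-budget total expected utility over `β1, β2 ∈ (0,1]`,
`y1 > 0` equals `(1/2) ∫₀^∞ n² f(n) dn` and is attained at `β1 = β2 = 1`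
(i.e. no taxation at all). -/
theorem stmt11 (f : ℝ → ℝ)
    (hf_cont : ContinuousOn f (Set.Ioi 0))
    (hf_nonneg : ∀ n ∈ Set.Ioi (0:ℝ), 0 ≤ f n)
    (hf_int : IntegrableOn f (Set.Ioi 0))
    (hf_one : ∫ n in Set.Ioi (0:ℝ), f n = 1)
    (hf2 : IntegrableOn (fun n => n ^ 2 * f n) (Set.Ioi 0))
    (hpos : 0 < ∫ n in Set.Ioi (0:ℝ), n ^ 2 * f n) :
    (∀ β1 ∈ Set.Ioc (0:ℝ) 1, ∀ β2 ∈ Set.Ioc (0:ℝ) 1, ∀ y1 > (0:ℝ),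
        totalUtility f β1 β2 y1 ≤ (1 / 2) * ∫ n in Set.Ioi (0:ℝ), n ^ 2 * f n) ∧
    (∀ y1 > (0:ℝ),
        totalUtility f 1 1 y1 = (1 / 2) * ∫ n in Set.Ioi (0:ℝ), n ^ 2 * f n) :=
  stmt11_general f hf_nonneg hf2
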